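/- arXiv:2201.06972 — 5 statements merged into one kernel-verified Lean document; each statement's English description precedes it below -/
import Mathlib

section
/- For every positive integer l, the number of anonymous walk sequences of length l equals the l-th Bell number, i.e., the number of anonymous walk sequences of length l equals the number of partitions of a set with l elements (equivalently, the number of equivalence relations on Fin l). -/
/-- An anonymous walk sequence of length `l`: a sequence `a 0, …, a l` of naturals with
`a 0 = 0`, `a (i+1) ≠ a i`, and `a (i+1) ≤ 1 + max (a 0, …, a i)`. -/
def IsAWS (l : ℕ) (a : Fin (l + 1) → ℕ) : Prop :=
  a 0 = 0 ∧
  (∀ i : Fin l, a i.succ ≠ a i.castSucc) ∧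
  (∀ i : Fin l, a i.succ ≤ 1 + (Finset.Iic i.castSucc).sup a)

/-!
An anonymous walk `a` is determined by its steps `b i`, where `b i` is the value `a (i + 1)`
renumbered inside `ℕ \ {a i}`, i.e. lowered by one when it exceeds `a i`. The largest value
visited by `a` up to time `i` is the largest `b j + 1` for `j < i`, so the growth condition on
`a` becomes the restricted growth condition `b i ≤ 1 + max_{j < i} b j`, and the condition
`a (i + 1) ≠ a i` is absorbed by the renumbering. Restricted growth strings on `Fin l` are
exactly the labellings of the blocks of a partition of `Fin l` by `0, 1, 2, …` in order of the
least elements of the blocks.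
-/

open Finset

/-- `(Iio i).sup (b · + 1)` is `1 + max_{j < i} b j`, read as `0` when no `j < i` exists. -/
def IsRestrictedGrowth {α : Type*} [Preorder α] [LocallyFiniteOrderBot α] (b : α → ℕ) : Prop :=
  ∀ i, b i ≤ (Iio i).sup (b · + 1)

lemma Fin.sup_Iic_val {α : Type*} [SemilatticeSup α] [OrderBot α] {n : ℕ} (g : ℕ → α)
    (i : Fin n) : (Iic i).sup (fun j => g j) = (range (i + 1)).sup g := by
  rw [Nat.range_succ_eq_Iic, ← Fin.map_valEmbedding_Iic, sup_map]
  rfl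

lemma Fin.sup_Iio_val {α : Type*} [SemilatticeSup α] [OrderBot α] {n : ℕ} (g : ℕ → α)
    (i : Fin n) : (Iio i).sup (fun j => g j) = (range i).sup g := by
  rw [← Nat.Iio_eq_range, ← Fin.map_valEmbedding_Iio, sup_map]
  rfl

namespace AnonymousWalk

/-- `skip c` is the increasing bijection from `ℕ` onto `ℕ \ {c}`, and `unskip c` its inverse. -/
def skip (c x : ℕ) : ℕ := if x < c then x else x + 1

def unskip (c y : ℕ) : ℕ := if y < c then y else y - 1

lemma skip_ne (c x : ℕ) : skip c x ≠ c := by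
  unfold skip; split <;> omega

lemma skip_le_succ (c x : ℕ) : skip c x ≤ x + 1 := by
  unfold skip; split <;> omega

lemma unskip_skip (c x : ℕ) : unskip c (skip c x) = x := by
  unfold skip unskip; split_ifs <;> omega

lemma skip_unskip {c y : ℕ} (h : y ≠ c) : skip c (unskip c y) = y := by
  unfold skip unskip; split_ifs <;> omega

lemma unskip_le {c y M : ℕ} (hc : c ≤ M) (hy : y ≤ M + 1) : unskip c y ≤ M := by
  unfold unskip; split <;> omega

def walkOf (b : ℕ → ℕ) : ℕ → ℕ
  | 0 => 0
  | n + 1 => skip (walkOf b n) (b n)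

lemma sup_range_walkOf (b : ℕ → ℕ) (n : ℕ) :
    (range (n + 1)).sup (walkOf b) = (range n).sup (b · + 1) := by
  induction n with
  | zero => simp [walkOf]
  | succ n ih =>
    rw [range_add_one, sup_insert, ih, range_add_one, sup_insert, walkOf]
    unfold skip
    split_ifs with hlt
    · have hle : walkOf b n ≤ (range n).sup (b · + 1) := ih ▸ le_sup (self_mem_range_succ n)
      rw [sup_eq_right.2 (by omega), sup_eq_right.2 (by omega)]
    · rfl

variable {l : ℕ}

noncomputable def ofGrowth (b : Fin l → ℕ) : Fin (l + 1) → ℕ :=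
  fun i => walkOf (Function.extend Fin.val b 0) i

def toGrowth (a : Fin (l + 1) → ℕ) : Fin l → ℕ :=
  fun i => unskip (a i.castSucc) (a i.succ)

lemma ofGrowth_zero (b : Fin l → ℕ) : ofGrowth b 0 = 0 := rfl

lemma ofGrowth_succ (b : Fin l → ℕ) (i : Fin l) :
    ofGrowth b i.succ = skip (ofGrowth b i.castSucc) (b i) := by
  simp only [ofGrowth, Fin.val_succ, Fin.val_castSucc, walkOf, Fin.val_injective.extend_apply]

lemma sup_Iic_ofGrowth (b : Fin l → ℕ) (i : Fin l) :
    (Iic i.castSucc).sup (ofGrowth b) = (Iio i).sup (b · + 1) := by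
  unfold ofGrowth
  rw [Fin.sup_Iic_val, Fin.val_castSucc, sup_range_walkOf,
    ← Fin.sup_Iio_val (Function.extend Fin.val b 0 · + 1)]
  simp only [Fin.val_injective.extend_apply]

lemma isAWS_ofGrowth {b : Fin l → ℕ} (hb : IsRestrictedGrowth b) : IsAWS l (ofGrowth b) := by
  refine ⟨ofGrowth_zero b, fun i => ?_, fun i => ?_⟩
  · rw [ofGrowth_succ]
    exact skip_ne _ _
  · rw [ofGrowth_succ, sup_Iic_ofGrowth]
    have hbi := hb i
    have hskip := skip_le_succ (ofGrowth b i.castSucc) (b i)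
    omega

lemma toGrowth_ofGrowth (b : Fin l → ℕ) : toGrowth (ofGrowth b) = b := by
  funext i
  rw [toGrowth, ofGrowth_succ, unskip_skip]

lemma ofGrowth_toGrowth {a : Fin (l + 1) → ℕ} (ha : IsAWS l a) : ofGrowth (toGrowth a) = a := by
  funext i
  induction i using Fin.induction with
  | zero => exact ha.1.symm ▸ ofGrowth_zero _
  | succ i ih => rw [ofGrowth_succ, ih, toGrowth, skip_unskip (ha.2.1 i)]

lemma isRestrictedGrowth_toGrowth {a : Fin (l + 1) → ℕ} (ha : IsAWS l a) :
    IsRestrictedGrowth (toGrowth a) := by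
  intro i
  rw [← sup_Iic_ofGrowth, ofGrowth_toGrowth ha]
  have hai := ha.2.2 i
  exact unskip_le (le_sup (mem_Iic.2 le_rfl)) (by omega)

noncomputable def growthEquiv (l : ℕ) :
    {a : Fin (l + 1) → ℕ // IsAWS l a} ≃ {b : Fin l → ℕ // IsRestrictedGrowth b} where
  toFun a := ⟨toGrowth a.1, isRestrictedGrowth_toGrowth a.2⟩
  invFun b := ⟨ofGrowth b.1, isAWS_ofGrowth b.2⟩
  left_inv a := Subtype.ext (ofGrowth_toGrowth a.2)
  right_inv b := Subtype.ext (toGrowth_ofGrowth b.1)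

end AnonymousWalk

namespace IsRestrictedGrowth

variable {α : Type*} [LinearOrder α] [LocallyFiniteOrderBot α] [WellFoundedLT α] {b c : α → ℕ}

lemma exists_lt_apply_eq (hb : IsRestrictedGrowth b) {i : α} {v : ℕ} (hv : v < b i) :
    ∃ j < i, b j = v := by
  induction i using WellFoundedLT.induction generalizing v with
  | _ i ih =>
    obtain ⟨j, hj, hvj⟩ := Finset.lt_sup_iff.1 (hv.trans_le (hb i))
    obtain hv_eq | hv_lt := (Nat.lt_succ_iff.1 hvj).eq_or_lt
    · exact ⟨j, mem_Iio.1 hj, hv_eq.symm⟩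
    · obtain ⟨k, hk, hbk⟩ := ih j (mem_Iio.1 hj) hv_lt
      exact ⟨k, hk.trans (mem_Iio.1 hj), hbk⟩

lemma apply_eq_sup (hb : IsRestrictedGrowth b) {i : α} (h : ∀ j < i, b j ≠ b i) :
    b i = (Iio i).sup (b · + 1) := by
  refine (hb i).antisymm (not_lt.1 fun hlt => ?_)
  obtain ⟨j, hj, hbj⟩ := Finset.lt_sup_iff.1 hlt
  obtain hij | hij := (Nat.lt_succ_iff.1 hbj).eq_or_lt
  · exact h j (mem_Iio.1 hj) hij.symm
  · obtain ⟨k, hk, hbk⟩ := hb.exists_lt_apply_eq hij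
    exact h k (hk.trans (mem_Iio.1 hj)) hbk

lemma eq_of_ker_eq (hb : IsRestrictedGrowth b) (hc : IsRestrictedGrowth c)
    (h : Setoid.ker b = Setoid.ker c) : b = c := by
  have hbc : ∀ i j, b i = b j ↔ c i = c j := fun i j => by
    rw [← Setoid.ker_def, h, Setoid.ker_def]
  funext i
  induction i using WellFoundedLT.induction with
  | _ i ih =>
    by_cases hseen : ∃ j < i, b j = b i
    · obtain ⟨j, hj, hbj⟩ := hseen
      rw [← hbj, ih j hj, (hbc j i).1 hbj]
    · push Not at hseen
      rw [hb.apply_eq_sup hseen, hc.apply_eq_sup fun j hj => mt (hbc j i).2 (hseen j hj)]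
      exact sup_congr rfl fun j hj => by rw [ih j (mem_Iio.1 hj)]

end IsRestrictedGrowth

namespace Setoid

variable {α : Type*} [LinearOrder α] [Fintype α] (s : Setoid α)

open Classical in
noncomputable def classMin (i : α) : α :=
  (univ.filter (s · i)).min' ⟨i, mem_filter.2 ⟨mem_univ i, s.refl i⟩⟩

lemma classMin_rel (i : α) : s (s.classMin i) i := by
  classical
  exact (mem_filter.1 (min'_mem (univ.filter (s · i)) _)).2

lemma classMin_le_of_rel {i j : α} (h : s j i) : s.classMin i ≤ j := by
  classical
  exact min'_le _ _ (mem_filter.2 ⟨mem_univ j, h⟩)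

lemma classMin_le (i : α) : s.classMin i ≤ i :=
  s.classMin_le_of_rel (s.refl i)

lemma classMin_eq_classMin_iff {i j : α} : s.classMin i = s.classMin j ↔ s i j := by
  refine ⟨fun h => s.trans (s.symm (s.classMin_rel i)) (h ▸ s.classMin_rel j), fun h => ?_⟩
  exact (s.classMin_le_of_rel (s.trans (s.classMin_rel j) (s.symm h))).antisymm
    (s.classMin_le_of_rel (s.trans (s.classMin_rel i) h))

lemma classMin_classMin (i : α) : s.classMin (s.classMin i) = s.classMin i :=
  (s.classMin_eq_classMin_iff).2 (s.classMin_rel i)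

/-- The label of the class of `i` when the classes are numbered `0, 1, 2, …` in order of their
least elements. -/
noncomputable def blockIndex (i : α) : ℕ :=
  #{m | s.classMin m = m ∧ m < s.classMin i}

lemma blockIndex_lt_blockIndex {i j : α} (h : s.classMin i < s.classMin j) :
    s.blockIndex i < s.blockIndex j := by
  refine card_lt_card ((ssubset_iff_of_subset fun m hm => ?_).2 ⟨s.classMin i, ?_, ?_⟩)
  · simp only [mem_filter, mem_univ, true_and] at hm ⊢
    exact ⟨hm.1, hm.2.trans h⟩
  · simpa using ⟨s.classMin_classMin i, h⟩
  · simp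

lemma blockIndex_eq_blockIndex_iff {i j : α} : s.blockIndex i = s.blockIndex j ↔ s i j := by
  rw [← classMin_eq_classMin_iff]
  refine ⟨fun h => ?_, fun h => by rw [blockIndex, blockIndex, h]⟩
  by_contra hne
  rcases lt_or_gt_of_ne hne with hlt | hgt
  · exact (s.blockIndex_lt_blockIndex hlt).ne h
  · exact (s.blockIndex_lt_blockIndex hgt).ne' h

lemma ker_blockIndex : ker s.blockIndex = s :=
  Setoid.ext fun _ _ => ker_def.trans s.blockIndex_eq_blockIndex_iff

lemma isRestrictedGrowth_blockIndex [LocallyFiniteOrderBot α] :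
    IsRestrictedGrowth s.blockIndex := by
  classical
  intro i
  set T := univ.filter fun m => s.classMin m = m ∧ m < s.classMin i with hT
  rcases T.eq_empty_or_nonempty with hempty | hne
  · simp [blockIndex, ← hT, hempty]
  -- the class with the largest least element below that of `i` has the preceding label
  set m := T.max' hne
  have hm : s.classMin m = m ∧ m < s.classMin i := (mem_filter.1 (T.max'_mem hne)).2
  have hprev : univ.filter (fun k => s.classMin k = k ∧ k < s.classMin m) = T.erase m := by
    ext k
    simp only [hm.1, mem_filter, mem_univ, true_and, mem_erase, T]
    refine ⟨fun hk => ⟨hk.2.ne, hk.1, hk.2.trans hm.2⟩, fun hk => ⟨hk.2.1, ?_⟩⟩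
    exact (T.le_max' k (by simpa [T] using hk.2)).lt_of_ne hk.1
  have hindex : s.blockIndex i = s.blockIndex m + 1 := by
    rw [blockIndex, blockIndex, ← hT, hprev, card_erase_add_one (T.max'_mem hne)]
  rw [hindex]
  exact le_sup (f := (s.blockIndex · + 1)) (mem_Iio.2 (hm.2.trans_le (s.classMin_le i)))

end Setoid

noncomputable def restrictedGrowthEquivSetoid (α : Type*) [LinearOrder α] [Fintype α]
    [LocallyFiniteOrderBot α] : {b : α → ℕ // IsRestrictedGrowth b} ≃ Setoid α :=
  Equiv.ofBijective (fun b => Setoid.ker b.1)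
    ⟨fun b c h => Subtype.ext (b.2.eq_of_ker_eq c.2 h),
      fun s => ⟨⟨s.blockIndex, s.isRestrictedGrowth_blockIndex⟩, s.ker_blockIndex⟩⟩

theorem aw_count_eq_bell_general (l : ℕ) :
    Nat.card {a : Fin (l + 1) → ℕ // IsAWS l a} = Nat.card (Setoid (Fin l)) :=
  Nat.card_congr ((AnonymousWalk.growthEquiv l).trans (restrictedGrowthEquivSetoid (Fin l)))

/-- The number of anonymous walk sequences of length `l` equals the `l`-th Bell number,
i.e. the number of equivalence relations on `Fin l`. -/
theorem aw_count_eq_bell (l : ℕ) (hl : 0 < l) :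
    Nat.card {a : Fin (l + 1) → ℕ // IsAWS l a} = Nat.card (Setoid (Fin l)) :=
  aw_count_eq_bell_general l
end

section
/- Let G be a simple graph with a node-type map Φ from its vertices to a type set T, and let w = (v_0, …, v_l) be a walk in G with anonymization f_w. Let A be the simple graph whose vertex set is {f_w(v_0), …, f_w(v_l)} ⊆ ℕ and whose edges are exactly the pairs {f_w(v_i), f_w(v_{i+1})} for 0 ≤ i < l. Then: (1) the assignment τ(f_w(v_i)) := Φ(v_i) is well defined; (2) the map sending f_w(v_i) to v_i is well defined and injective; and (3) this map is a graph isomorphism from A onto the subgraph of G with vertex set {v_0, …, v_l} and edge set {{v_i, v_{i+1}} : 0 ≤ i < l} which carries the type map τ to the restriction of Φ. -/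
/-- The first index at which the value `g i` occurs in `g`. -/
def firstOcc {n : ℕ} {α : Type*} [DecidableEq α] (g : Fin n → α) (i : Fin n) : Fin n :=
  (Finset.univ.filter fun j => g j = g i).min' ⟨i, by simp⟩

/-- The anonymization of `g` at `i`: the number of distinct values of `g` occurring
strictly before the first occurrence of `g i`. -/
def anonymize {n : ℕ} {α : Type*} [DecidableEq α] (g : Fin n → α) (i : Fin n) : ℕ :=
  ((Finset.univ.filter fun j => j < firstOcc g i).image g).card

/-- The reconstructed graph `A` of a walk `w`: the simple graph on the vertex set
`{f_w(v_0), …, f_w(v_l)} ⊆ ℕ` whose edges are exactly the pairs `{f_w(v_i), f_w(v_{i+1})}`. -/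
def reconGraph {V : Type*} [DecidableEq V] (l : ℕ) (w : Fin (l + 1) → V) :
    SimpleGraph (Set.range (anonymize w)) :=
  SimpleGraph.induce (Set.range (anonymize w))
    (SimpleGraph.fromEdgeSet
      {e : Sym2 ℕ | ∃ i : Fin l, e = s(anonymize w i.castSucc, anonymize w i.succ)})

/-- The subgraph of `G` visited by a walk `w`: vertex set `{v_0, …, v_l}` and edge set
`{{v_i, v_{i+1}} : 0 ≤ i < l}`. -/
def walkSubgraph {V : Type*} (G : SimpleGraph V) (l : ℕ) (w : Fin (l + 1) → V) :
    SimpleGraph (Set.range w) :=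
  SimpleGraph.induce (Set.range w)
    (SimpleGraph.fromEdgeSet {e : Sym2 V | ∃ i : Fin l, e = s(w i.castSucc, w i.succ)})

lemma g_firstOcc {n : ℕ} {α : Type*} [DecidableEq α] (g : Fin n → α) (i : Fin n) :
    g (firstOcc g i) = g i := by
  have := (Finset.univ.filter fun j => g j = g i).min'_mem ⟨i, by simp⟩
  simpa [firstOcc] using this

lemma firstOcc_min {n : ℕ} {α : Type*} [DecidableEq α] (g : Fin n → α) (i k : Fin n)
    (hk : k < firstOcc g i) : g k ≠ g i := by
  intro h
  exact absurd ((Finset.univ.filter fun j => g j = g i).min'_le k (by simp [h])) (not_le.mpr hk)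

lemma firstOcc_congr {n : ℕ} {α : Type*} [DecidableEq α] (g : Fin n → α) {i j : Fin n}
    (h : g i = g j) : firstOcc g i = firstOcc g j := by
  simp only [firstOcc, h]

lemma anonymize_lt {n : ℕ} {α : Type*} [DecidableEq α] (g : Fin n → α) {i j : Fin n}
    (h : firstOcc g i < firstOcc g j) : anonymize g i < anonymize g j := by
  apply Finset.card_lt_card
  constructor
  · apply Finset.image_subset_image
    intro k hk
    simp only [Finset.mem_filter, Finset.mem_univ, true_and] at hk ⊢
    exact lt_trans hk h
  · intro hsub
    have hmem : g i ∈ (Finset.univ.filter fun k => k < firstOcc g j).image g := by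
      refine Finset.mem_image.mpr ⟨firstOcc g i, by simp [h], g_firstOcc g i⟩
    have := hsub hmem
    rcases Finset.mem_image.mp this with ⟨k, hk, hgk⟩
    simp only [Finset.mem_filter, Finset.mem_univ, true_and] at hk
    exact firstOcc_min g i k hk hgk

lemma anonymize_eq_iff {n : ℕ} {α : Type*} [DecidableEq α] (g : Fin n → α) (i j : Fin n) :
    anonymize g i = anonymize g j ↔ g i = g j := by
  constructor
  · intro h
    rcases lt_trichotomy (firstOcc g i) (firstOcc g j) with hlt | heq | hgt
    · exact absurd h (ne_of_lt (anonymize_lt g hlt))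
    · rw [← g_firstOcc g i, ← g_firstOcc g j, heq]
    · exact absurd h.symm (ne_of_lt (anonymize_lt g hgt))
  · intro h
    unfold anonymize
    rw [firstOcc_congr g h]

/-- Given a walk `v_0, …, v_l` in a simple graph `G` with node-type map `Φ` and
anonymization `f = anonymize v`:
(1) `τ (f (v i)) := Φ (v i)` is well defined;
(2) the map `f (v i) ↦ v i` is well defined and injective;
(3) this map is a graph isomorphism from the reconstructed graph `A` onto the subgraph
of `G` visited by the walk, carrying the type map `τ` to the restriction of `Φ`. -/
theorem reconGraph_iso {V T : Type*} [DecidableEq V] (G : SimpleGraph V) (Φ : V → T)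
    (l : ℕ) (v : Fin (l + 1) → V)
    (hadj : ∀ i : Fin l, G.Adj (v i.castSucc) (v i.succ)) :
    (∀ i j : Fin (l + 1), anonymize v i = anonymize v j → Φ (v i) = Φ (v j)) ∧
    (∀ i j : Fin (l + 1), anonymize v i = anonymize v j → v i = v j) ∧
    (∀ i j : Fin (l + 1), v i = v j → anonymize v i = anonymize v j) ∧
    ∃ σ : reconGraph l v ≃g walkSubgraph G l v,
      (∀ i : Fin (l + 1), (σ ⟨anonymize v i, ⟨i, rfl⟩⟩ : V) = v i) ∧
      (∀ (x : Set.range (anonymize v)) (i : Fin (l + 1)),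
        (x : ℕ) = anonymize v i → Φ ((σ x : V)) = Φ (v i)) := by
  have key := anonymize_eq_iff v
  refine ⟨fun i j h => by rw [(key i j).mp h], fun i j h => (key i j).mp h,
    fun i j h => (key i j).mpr h, ?_⟩
  -- choice functions
  have hpk : ∀ x : Set.range (anonymize v), anonymize v x.2.choose = (x : ℕ) :=
    fun x => x.2.choose_spec
  have hpv : ∀ y : Set.range v, v y.2.choose = (y : V) := fun y => y.2.choose_spec
  let e : Set.range (anonymize v) ≃ Set.range v :=
    { toFun := fun x => ⟨v x.2.choose, Set.mem_range_self _⟩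
      invFun := fun y => ⟨anonymize v y.2.choose, Set.mem_range_self _⟩
      left_inv := by
        intro x
        apply Subtype.ext
        show anonymize v _ = (x : ℕ)
        rw [← hpk x]
        exact (key _ _).mpr (hpv ⟨v x.2.choose, Set.mem_range_self _⟩)
      right_inv := by
        intro y
        apply Subtype.ext
        show v _ = (y : V)
        rw [← hpv y]
        exact (key _ _).mp (hpk ⟨anonymize v y.2.choose, Set.mem_range_self _⟩) }
  have e_spec : ∀ (x : Set.range (anonymize v)) (i : Fin (l + 1)),
      (x : ℕ) = anonymize v i → (e x : V) = v i := by
    intro x i hx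
    exact (key _ _).mp (by rw [hpk x, hx])
  have e_ne : ∀ x y : Set.range (anonymize v), ((e x : V) = (e y : V)) ↔ (x : ℕ) = (y : ℕ) := by
    intro x y
    constructor
    · intro h
      rw [← hpk x, ← hpk y]
      exact (key _ _).mpr h
    · intro h
      exact e_spec x _ (by rw [h, hpk y])
  refine ⟨⟨e, ?_⟩, fun i => e_spec _ i rfl, fun x i hx => congrArg Φ (e_spec x i hx)⟩
  intro x y
  show (walkSubgraph G l v).Adj (e x) (e y) ↔ (reconGraph l v).Adj x y
  simp only [walkSubgraph, reconGraph, SimpleGraph.induce, SimpleGraph.comap,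
    SimpleGraph.fromEdgeSet_adj, Set.mem_setOf_eq, Function.Embedding.coe_subtype]
  constructor
  · rintro ⟨⟨i, hi⟩, hne⟩
    rcases Sym2.eq_iff.mp hi with ⟨h1, h2⟩ | ⟨h1, h2⟩
    · have hx : (x : ℕ) = anonymize v i.castSucc := by rw [← hpk x, (key _ _).mpr h1]
      have hy : (y : ℕ) = anonymize v i.succ := by rw [← hpk y, (key _ _).mpr h2]
      exact ⟨⟨i, by rw [hx, hy]⟩, fun h => hne ((e_ne x y).mpr h)⟩
    · have hx : (x : ℕ) = anonymize v i.succ := by rw [← hpk x, (key _ _).mpr h1]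
      have hy : (y : ℕ) = anonymize v i.castSucc := by rw [← hpk y, (key _ _).mpr h2]
      exact ⟨⟨i, by rw [hx, hy, Sym2.eq_swap]⟩, fun h => hne ((e_ne x y).mpr h)⟩
  · rintro ⟨⟨i, hi⟩, hne⟩
    have hne' : (e x : V) ≠ (e y : V) := fun h => hne ((e_ne x y).mp h)
    rcases Sym2.eq_iff.mp hi with ⟨h1, h2⟩ | ⟨h1, h2⟩
    · exact ⟨⟨i, by rw [e_spec x _ h1, e_spec y _ h2]⟩, hne'⟩
    · exact ⟨⟨i, by rw [e_spec x _ h1, e_spec y _ h2, Sym2.eq_swap]⟩, hne'⟩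
end

section
/- Let G be a simple graph with a node-type map Φ from its vertices to a type set T, let v be a vertex of G, and let h = ((a_0, τ_0), …, (a_l, τ_l)) be a heterogeneous anonymous walk sequence of length l over T. Let H(h) be the simple graph with vertex set {a_0, …, a_l} ⊆ ℕ, edge set {{a_i, a_{i+1}} : 0 ≤ i < l}, and type map sending a_i to τ_i. Then h is the heterogeneous anonymous walk of some walk of length l in G starting at v if and only if there exists an injective graph homomorphism σ from H(h) into G with σ(0) = v and Φ(σ(x)) equal to the type of x in H(h) for every vertex x of H(h). -/
/-- The graph `H(h)` reconstructed from a heterogeneous anonymous walk sequence with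
underlying anonymous walk sequence `a`: vertex set `{a_0, …, a_l} ⊆ ℕ` and
edge set `{{a_i, a_{i+1}} : 0 ≤ i < l}`. -/
def hawGraph (l : ℕ) (a : Fin (l + 1) → ℕ) : SimpleGraph (Set.range a) :=
  SimpleGraph.induce (Set.range a)
    (SimpleGraph.fromEdgeSet {e : Sym2 ℕ | ∃ i : Fin l, e = s(a i.castSucc, a i.succ)})

/-!
The anonymization of a sequence depends only on its equality pattern: it is unchanged by
composing with an injective map, and it identifies two positions exactly when the sequence
does. An anonymous walk sequence is its own anonymization, since each new value is one more than
the largest value before it. Hence the walks with anonymization `a` are exactly the maps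
`σ ∘ a` with `σ` injective on `{a_0, …, a_l}`, and such a map is a walk in `G` exactly when `σ`
maps the edges `{a_i, a_{i+1}}` of `H(h)` to edges of `G`.
-/

open Finset

section Anonymize

variable {n : ℕ} {α β : Type*} [DecidableEq α] [DecidableEq β]

theorem apply_firstOcc (g : Fin n → α) (i : Fin n) : g (firstOcc g i) = g i := by
  simpa [firstOcc] using min'_mem (univ.filter fun j => g j = g i) ⟨i, by simp⟩

theorem firstOcc_le {g : Fin n → α} {i j : Fin n} (h : g j = g i) : firstOcc g i ≤ j :=
  min'_le _ _ (by simp [h])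

theorem firstOcc_eq_of_apply_eq {g : Fin n → α} {i j : Fin n} (h : g i = g j) :
    firstOcc g i = firstOcc g j := by
  simp only [firstOcc, h]

theorem firstOcc_comp {f : α → β} (hf : Function.Injective f) (g : Fin n → α) :
    firstOcc (f ∘ g) = firstOcc g := by
  ext1 i
  simp only [firstOcc, Function.comp_apply, hf.eq_iff]

theorem anonymize_eq_card_image_Iio (g : Fin n → α) (i : Fin n) :
    anonymize g i = #((Iio (firstOcc g i)).image g) := by
  rw [anonymize, filter_gt_eq_Iio]

theorem anonymize_comp {f : α → β} (hf : Function.Injective f) (g : Fin n → α) :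
    anonymize (f ∘ g) = anonymize g := by
  ext1 i
  rw [anonymize_eq_card_image_Iio, anonymize_eq_card_image_Iio, firstOcc_comp hf,
    ← image_image, card_image_of_injective _ hf]

/-- The value at a first occurrence is new, so the set of values seen before grows. -/
theorem anonymize_lt_anonymize {g : Fin n → α} {i j : Fin n} (h : firstOcc g i < firstOcc g j) :
    anonymize g i < anonymize g j := by
  rw [anonymize_eq_card_image_Iio, anonymize_eq_card_image_Iio]
  refine card_lt_card ⟨image_subset_image (Iio_subset_Iio h.le), fun hsub => ?_⟩
  obtain ⟨k, hk, hgk⟩ := mem_image.mp <|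
    hsub (mem_image.mpr ⟨firstOcc g i, mem_Iio.mpr h, apply_firstOcc g i⟩)
  exact (mem_Iio.mp hk).not_ge (firstOcc_le hgk)

theorem anonymize_eq_anonymize_iff (g : Fin n → α) (i j : Fin n) :
    anonymize g i = anonymize g j ↔ g i = g j := by
  refine ⟨fun h => ?_, fun h => by rw [anonymize, anonymize, firstOcc_eq_of_apply_eq h]⟩
  rcases lt_trichotomy (firstOcc g i) (firstOcc g j) with hlt | heq | hgt
  · exact absurd h (anonymize_lt_anonymize hlt).ne
  · rw [← apply_firstOcc g i, ← apply_firstOcc g j, heq]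
  · exact absurd h (anonymize_lt_anonymize hgt).ne'

end Anonymize

theorem Fin.Iio_succ {n : ℕ} (i : Fin n) : Iio i.succ = Iic i.castSucc := by
  ext j; simp [Fin.le_castSucc_iff]

theorem Fin.Iic_succ {n : ℕ} (i : Fin n) : Iic i.succ = insert i.succ (Iic i.castSucc) := by
  rw [Iic_eq_cons_Iio, cons_eq_insert, Fin.Iio_succ]

namespace IsAWS

variable {l : ℕ} {a : Fin (l + 1) → ℕ}

theorem image_Iic (ha : IsAWS l a) (k : Fin (l + 1)) :
    (Iic k).image a = range ((Iic k).sup a + 1) := by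
  induction k using Fin.induction with
  | zero => rw [← bot_eq_zero, Iic_bot, image_singleton, sup_singleton, bot_eq_zero, ha.1]; rfl
  | succ i ih =>
    rw [Fin.Iic_succ, image_insert, sup_insert, ih]
    rcases (ha.2.2 i).lt_or_eq with hlt | heq
    · rw [max_eq_right (by omega), insert_eq_of_mem (mem_range.mpr (by omega))]
    · rw [heq, max_eq_left (by omega), add_comm 1, ← range_add_one]

theorem eq_card_image_Iio_of_notMem (ha : IsAWS l a) {k : Fin (l + 1)}
    (hk : a k ∉ (Iio k).image a) : #((Iio k).image a) = a k := by
  cases k using Fin.cases with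
  | zero => rw [← bot_eq_zero, Iio_bot, image_empty, card_empty, bot_eq_zero, ha.1]
  | succ i =>
    rw [Fin.Iio_succ, ha.image_Iic, mem_range, not_lt] at *
    rw [card_range]
    have := ha.2.2 i
    omega

theorem anonymize_eq (ha : IsAWS l a) : anonymize a = a := by
  ext1 i
  rw [anonymize_eq_card_image_Iio, ← apply_firstOcc a i]
  refine ha.eq_card_image_Iio_of_notMem fun hmem => ?_
  obtain ⟨j, hj, haj⟩ := mem_image.mp hmem
  exact (mem_Iio.mp hj).not_ge (firstOcc_le (haj.trans (apply_firstOcc a i)))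

end IsAWS

section HawGraph

variable {l : ℕ} {a : Fin (l + 1) → ℕ}

theorem hawGraph_adj {x y : Set.range a} :
    (hawGraph l a).Adj x y ↔
      (∃ i : Fin l, s((x : ℕ), y) = s(a i.castSucc, a i.succ)) ∧ (x : ℕ) ≠ y :=
  SimpleGraph.fromEdgeSet_adj _

theorem hawGraph_adj_rangeFactorization {i : Fin l} (h : a i.castSucc ≠ a i.succ) :
    (hawGraph l a).Adj (Set.rangeFactorization a i.castSucc) (Set.rangeFactorization a i.succ) :=
  hawGraph_adj.mpr ⟨⟨i, rfl⟩, h⟩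

theorem exists_injective_hom_hawGraph {V : Type*} {G : SimpleGraph V} {w : Fin (l + 1) → V}
    (hw : ∀ i : Fin l, G.Adj (w i.castSucc) (w i.succ)) (hpat : ∀ i j, w i = w j ↔ a i = a j) :
    ∃ σ : hawGraph l a →g G, Function.Injective σ ∧ ∀ i, σ (Set.rangeFactorization a i) = w i := by
  have hfac : w.FactorsThrough (Set.rangeFactorization a) := fun i j h =>
    (hpat i j).mpr (congrArg Subtype.val h)
  set σ := Function.extend (Set.rangeFactorization a) w fun _ => w 0
  have hσ : ∀ i, σ (Set.rangeFactorization a i) = w i := hfac.extend_apply _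
  have hinj : σ.Injective := by
    intro x y hxy
    obtain ⟨j, rfl⟩ := Set.rangeFactorization_surjective x
    obtain ⟨k, rfl⟩ := Set.rangeFactorization_surjective y
    rw [hσ, hσ] at hxy
    exact Subtype.ext ((hpat j k).mp hxy)
  refine ⟨⟨σ, fun {x y} hxy => ?_⟩, hinj, hσ⟩
  obtain ⟨⟨i, hi⟩, -⟩ := hawGraph_adj.mp hxy
  obtain ⟨j, rfl⟩ := Set.rangeFactorization_surjective x
  obtain ⟨k, rfl⟩ := Set.rangeFactorization_surjective y
  rw [hσ, hσ]
  rcases Sym2.eq_iff.mp hi with ⟨hj, hk⟩ | ⟨hj, hk⟩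
  · rw [(hpat _ _).mpr hj, (hpat _ _).mpr hk]
    exact hw i
  · rw [(hpat _ _).mpr hj, (hpat _ _).mpr hk]
    exact (hw i).symm

end HawGraph

theorem haw_realizable_iff_general {V T : Type*} [DecidableEq V] (G : SimpleGraph V) (Φ : V → T)
    (v : V) (l : ℕ) (a : Fin (l + 1) → ℕ) (τs : Fin (l + 1) → T)
    (ha : IsAWS l a) :
    (∃ w : Fin (l + 1) → V, w 0 = v ∧ (∀ i : Fin l, G.Adj (w i.castSucc) (w i.succ)) ∧
      (∀ i, anonymize w i = a i) ∧ (∀ i, Φ (w i) = τs i)) ↔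
    (∃ σ : hawGraph l a →g G, Function.Injective σ ∧
      σ ⟨(0 : ℕ), ⟨0, ha.1⟩⟩ = v ∧ ∀ i : Fin (l + 1), Φ (σ ⟨a i, ⟨i, rfl⟩⟩) = τs i) := by
  have h0 : Set.rangeFactorization a 0 = ⟨(0 : ℕ), ⟨0, ha.1⟩⟩ := Subtype.ext ha.1
  constructor
  · rintro ⟨w, rfl, hw, hwa, hwτ⟩
    have hpat : ∀ i j, w i = w j ↔ a i = a j := fun i j => by
      rw [← anonymize_eq_anonymize_iff, hwa, hwa]
    obtain ⟨σ, hσ, hσw⟩ := exists_injective_hom_hawGraph hw hpat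
    exact ⟨σ, hσ, h0 ▸ hσw 0, fun i => hσw i ▸ hwτ i⟩
  · rintro ⟨σ, hσ, rfl, hστ⟩
    have hσa : anonymize (σ ∘ Set.rangeFactorization a) = a := by
      rw [anonymize_comp hσ, ← anonymize_comp Subtype.val_injective, Set.rangeFactorization_eq,
        ha.anonymize_eq]
    exact ⟨σ ∘ Set.rangeFactorization a, congrArg σ h0,
      fun i => σ.map_adj (hawGraph_adj_rangeFactorization (ha.2.1 i).symm),
      congrFun hσa, hστ⟩

/-- A heterogeneous anonymous walk sequence `h = ((a_0, τ_0), …, (a_l, τ_l))` is the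
heterogeneous anonymous walk of some walk of length `l` in `G` starting at `v` iff there is
an injective graph homomorphism `σ` from `H(h)` into `G` with `σ 0 = v` that matches the
type map of `H(h)` with `Φ`. -/
theorem haw_realizable_iff {V T : Type*} [DecidableEq V] (G : SimpleGraph V) (Φ : V → T)
    (v : V) (l : ℕ) (a : Fin (l + 1) → ℕ) (τs : Fin (l + 1) → T)
    (ha : IsAWS l a) (hcompat : ∀ i j, a i = a j → τs i = τs j) :
    (∃ w : Fin (l + 1) → V, w 0 = v ∧ (∀ i : Fin l, G.Adj (w i.castSucc) (w i.succ)) ∧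
      (∀ i, anonymize w i = a i) ∧ (∀ i, Φ (w i) = τs i)) ↔
    (∃ σ : hawGraph l a →g G, Function.Injective σ ∧
      σ ⟨(0 : ℕ), ⟨0, ha.1⟩⟩ = v ∧ ∀ i : Fin (l + 1), Φ (σ ⟨a i, ⟨i, rfl⟩⟩) = τs i) :=
  haw_realizable_iff_general G Φ v l a τs ha
end

section
/- Let G be a simple graph, v a vertex of G, r a natural number, and suppose every vertex of G is joined to v by a path of length at most r and G has m ≥ 1 edges. Then among all economical walks in G starting at v, the maximum length is exactly 2m, and every economical walk from v of length 2m traverses every edge of G (so the subgraph formed by its visited vertices and traversed edges is all of G). -/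
/-!
There are `2m` darts, so an economical walk has length at most `2m`, with equality exactly when
it uses every dart; it then crosses every edge, and by connectivity it visits every vertex.

For existence, take a longest economical walk anywhere in the graph. It is closed: otherwise its
end has been entered once more than it has been left, so some dart out of the end is unused and
the walk could be prolonged. Being closed, it can be rotated to start at any vertex of its
support, so by the same argument every dart leaving its support is used. By connectivity the
support is then all of `V`, so the walk uses every dart, and rotating it to start at `v` gives an
economical walk of length `2m`.
-/

open Finset

theorem List.Nodup.length_eq_card_iff {α : Type*} [Fintype α] {l : List α} (hl : l.Nodup) :
    l.length = Fintype.card α ↔ ∀ a, a ∈ l := by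
  classical
  rw [← List.toFinset_card_of_nodup hl, Finset.card_eq_iff_eq_univ, Finset.eq_univ_iff_forall]
  simp only [List.mem_toFinset]

namespace SimpleGraph

variable {V : Type*} {G : SimpleGraph V}

variable (G) in
theorem dart_snd_fiber_card_eq_degree [Fintype V] [DecidableEq V] [DecidableRel G.Adj] (u : V) :
    #{d : G.Dart | d.snd = u} = G.degree u := by
  rw [← G.dart_fst_fiber_card_eq_degree u]
  exact Finset.card_bij' (fun d _ => d.symm) (fun d _ => d.symm) (by simp) (by simp) (by simp)
    (by simp)

theorem Reachable.mem_of_adj_closed {S : Set V} {a b : V} (hab : G.Reachable a b) (ha : a ∈ S)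
    (hS : ∀ x y, x ∈ S → G.Adj x y → y ∈ S) : b ∈ S := by
  obtain ⟨p⟩ := hab
  induction p with
  | nil => exact ha
  | cons h _ ih => exact ih (hS _ _ ha h)

namespace Walk

variable {s t : V}

theorem countP_snd_darts_eq_countP_fst_darts_add_one [DecidableEq V] (w : G.Walk s t)
    (h : t ≠ s) : w.darts.countP (·.snd = t) = w.darts.countP (·.fst = t) + 1 := by
  have hin := congr_arg (List.countP (· = t)) w.cons_map_snd_darts
  have hout := congr_arg (List.countP (· = t)) w.map_fst_darts_append
  simp only [h.symm, decide_false, Bool.false_eq_true, not_false_eq_true,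
    List.countP_cons_of_neg, List.countP_cons_of_pos, List.countP_map, Function.comp_def,
    List.countP_append, decide_true, List.countP_nil, zero_add] at hin hout
  omega

theorem mem_support_of_reachable (w : G.Walk s t)
    (hw : ∀ d : G.Dart, d.fst ∈ w.support → d ∈ w.darts) {x : V} (hx : G.Reachable s x) :
    x ∈ w.support :=
  hx.mem_of_adj_closed (S := {y | y ∈ w.support}) w.start_mem_support fun y z hy hyz =>
    w.dart_snd_mem_support_of_mem_darts (hw ⟨(y, z), hyz⟩ hy)

theorem exists_darts_nodup_length_eq_add_one {w : G.Walk s t} (hw : w.darts.Nodup) {d : G.Dart}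
    (hd : d.fst = t) (hdw : d ∉ w.darts) :
    ∃ w' : G.Walk s d.snd, w'.darts.Nodup ∧ w'.length = w.length + 1 := by
  obtain ⟨⟨a, b⟩, hab⟩ := d
  subst hd
  refine ⟨w.concat hab, ?_, w.length_concat hab⟩
  rw [darts_concat]
  exact hw.concat hdw

section Longest

variable {w : G.Walk s t} (hw : w.darts.Nodup)
  (hmax : ∀ (a b : V) (w' : G.Walk a b), w'.darts.Nodup → w'.length ≤ w.length)
include hw hmax

theorem dart_mem_darts_of_fst_eq_of_forall_length_le {d : G.Dart} (hd : d.fst = t) :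
    d ∈ w.darts := by
  by_contra hdw
  obtain ⟨w', hw', hlen⟩ := exists_darts_nodup_length_eq_add_one hw hd hdw
  have := hmax _ _ w' hw'
  omega

theorem eq_of_forall_length_le [Fintype V] [DecidableEq V] [DecidableRel G.Adj] : t = s := by
  by_contra hts
  have hout : G.degree t ≤ w.darts.countP (·.fst = t) := by
    rw [← G.dart_fst_fiber_card_eq_degree, ← hw.card_eq_countP]
    exact Finset.card_le_card fun d hd => by
      simp only [Finset.mem_filter, List.mem_toFinset] at hd ⊢
      exact ⟨dart_mem_darts_of_fst_eq_of_forall_length_le hw hmax hd.2, hd.2⟩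
  have hin : w.darts.countP (·.snd = t) ≤ G.degree t := by
    rw [← G.dart_snd_fiber_card_eq_degree, ← hw.card_eq_countP]
    exact Finset.card_le_card (Finset.filter_subset_filter _ (Finset.subset_univ _))
  have := w.countP_snd_darts_eq_countP_fst_darts_add_one hts
  omega

end Longest

theorem dart_mem_darts_of_fst_mem_support_of_forall_length_le [DecidableEq V] {w : G.Walk s s}
    (hw : w.darts.Nodup)
    (hmax : ∀ (a b : V) (w' : G.Walk a b), w'.darts.Nodup → w'.length ≤ w.length)
    {d : G.Dart} (hd : d.fst ∈ w.support) : d ∈ w.darts := by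
  have hrot := (w.rotate_darts d.fst hd).perm
  refine hrot.mem_iff.1 (dart_mem_darts_of_fst_eq_of_forall_length_le (hrot.nodup_iff.2 hw)
    (fun a b w' hw' => ?_) rfl)
  rw [length_rotate]
  exact hmax a b w' hw'

variable [Fintype V] [DecidableRel G.Adj]

theorem length_le_card_dart {w : G.Walk s t} (hw : w.darts.Nodup) :
    w.length ≤ Fintype.card G.Dart :=
  w.length_darts ▸ hw.length_le_card

theorem length_eq_card_dart_iff {w : G.Walk s t} (hw : w.darts.Nodup) :
    w.length = Fintype.card G.Dart ↔ ∀ d, d ∈ w.darts :=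
  w.length_darts ▸ hw.length_eq_card_iff

end Walk

theorem exists_darts_nodup_forall_length_le [Fintype V] [DecidableRel G.Adj] [Nonempty V] :
    ∃ (s t : V) (w : G.Walk s t), w.darts.Nodup ∧
      ∀ (a b : V) (w' : G.Walk a b), w'.darts.Nodup → w'.length ≤ w.length := by
  set lengths : Set ℕ := {n | ∃ (a b : V) (w : G.Walk a b), w.darts.Nodup ∧ w.length = n}
  have hbdd : BddAbove lengths := ⟨Fintype.card G.Dart, by
    rintro _ ⟨a, b, w, hw, rfl⟩
    exact Walk.length_le_card_dart hw⟩
  have hne : lengths.Nonempty :=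
    ⟨0, Classical.arbitrary V, _, Walk.nil, List.nodup_nil, Walk.length_nil⟩
  obtain ⟨s, t, w, hw, hlen⟩ := Nat.sSup_mem hne hbdd
  exact ⟨s, t, w, hw, fun a b w' hw' => hlen ▸ le_csSup hbdd ⟨a, b, w', hw', rfl⟩⟩

theorem Preconnected.exists_closed_walk_darts_nodup_forall_mem [Fintype V] [DecidableEq V]
    [DecidableRel G.Adj] (hG : G.Preconnected) (v : V) :
    ∃ w : G.Walk v v, w.darts.Nodup ∧ ∀ d, d ∈ w.darts := by
  have : Nonempty V := ⟨v⟩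
  obtain ⟨s, t, w, hw, hmax⟩ := G.exists_darts_nodup_forall_length_le
  obtain rfl := Walk.eq_of_forall_length_le hw hmax
  have hsupp : ∀ d : G.Dart, d.fst ∈ w.support → d ∈ w.darts := fun d =>
    Walk.dart_mem_darts_of_fst_mem_support_of_forall_length_le hw hmax
  have hall (d : G.Dart) : d ∈ w.darts := hsupp d (w.mem_support_of_reachable hsupp (hG _ _))
  have hv := w.mem_support_of_reachable hsupp (hG t v)
  have hrot := (w.rotate_darts v hv).perm
  exact ⟨w.rotate v hv, hrot.nodup_iff.2 hw, fun d => hrot.mem_iff.2 (hall d)⟩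

end SimpleGraph

open SimpleGraph

theorem economical_walk_max_length_general {V : Type*} [Fintype V] [DecidableEq V]
    (G : SimpleGraph V) [DecidableRel G.Adj] (v : V) (r : ℕ)
    (hball : ∀ u : V, ∃ w : G.Walk v u, w.length ≤ r) :
    (∃ (u : V) (w : G.Walk v u), w.darts.Nodup ∧ w.length = 2 * G.edgeFinset.card) ∧
    (∀ (u : V) (w : G.Walk v u), w.darts.Nodup → w.length ≤ 2 * G.edgeFinset.card) ∧
    ∀ (u : V) (w : G.Walk v u), w.darts.Nodup → w.length = 2 * G.edgeFinset.card →
      (∀ e ∈ G.edgeSet, e ∈ w.edges) ∧ ∀ x : V, x ∈ w.support := by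
  have hreach (x : V) : G.Reachable v x := (hball x).elim fun w _ => w.reachable
  have hG : G.Preconnected := fun x y => (hreach x).symm.trans (hreach y)
  rw [← G.dart_card_eq_twice_card_edges]
  refine ⟨?_, fun _ _ hw => Walk.length_le_card_dart hw, fun _ w hw hlen => ?_⟩
  · obtain ⟨w, hw, hall⟩ := hG.exists_closed_walk_darts_nodup_forall_mem v
    exact ⟨v, w, hw, (Walk.length_eq_card_dart_iff hw).2 hall⟩
  · have hall := (Walk.length_eq_card_dart_iff hw).1 hlen
    refine ⟨fun e he => ?_, fun x => w.mem_support_of_reachable (fun d _ => hall d) (hreach x)⟩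
    induction e using Sym2.ind with
    | h a b => exact w.edges_eq_map_darts ▸ List.mem_map_of_mem (hall ⟨(a, b), he⟩)

/-- Let `G` be a finite simple graph with `m ≥ 1` edges in which every vertex is joined to
`v` by a walk of length at most `r`. Then the maximum length of an economical walk (a walk
whose darts are pairwise distinct) starting at `v` is exactly `2m`, and every economical walk
from `v` of length `2m` traverses every edge of `G` and visits every vertex of `G` (so the
subgraph formed by its visited vertices and traversed edges is all of `G`). -/
theorem economical_walk_max_length {V : Type*} [Fintype V] [DecidableEq V]
    (G : SimpleGraph V) [DecidableRel G.Adj] (v : V) (r : ℕ)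
    (hball : ∀ u : V, ∃ w : G.Walk v u, w.length ≤ r)
    (hm : 1 ≤ G.edgeFinset.card) :
    (∃ (u : V) (w : G.Walk v u), w.darts.Nodup ∧ w.length = 2 * G.edgeFinset.card) ∧
    (∀ (u : V) (w : G.Walk v u), w.darts.Nodup → w.length ≤ 2 * G.edgeFinset.card) ∧
    ∀ (u : V) (w : G.Walk v u), w.darts.Nodup → w.length = 2 * G.edgeFinset.card →
      (∀ e ∈ G.edgeSet, e ∈ w.edges) ∧ ∀ x : V, x ∈ w.support :=
  economical_walk_max_length_general G v r hball
end

section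
/- For every positive integer l and every finite nonempty type set T, the number of heterogeneous anonymous walk sequences of length l over T equals the sum, over all anonymous walk sequences a = (a_0, …, a_l) of length l, of |T| raised to the number of distinct values occurring in a; consequently this number is at most |T|^{l+1} · B_l, where B_l is the number of partitions of an l-element set. -/
namespace AWSAux

/-- running maximum -/
def Mx (A : ℕ → ℕ) (n : ℕ) : ℕ := (Finset.range (n+1)).sup A

/-- derived reduced sequence -/
def Bf (A : ℕ → ℕ) (n : ℕ) : ℕ := if A (n+1) < A n then A (n+1) else A (n+1) - 1

structure Nice (l : ℕ) (A : ℕ → ℕ) : Prop where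
  h0 : A 0 = 0
  hne : ∀ n < l, A (n+1) ≠ A n
  hle : ∀ n < l, A (n+1) ≤ 1 + Mx A n

variable {l : ℕ} {A : ℕ → ℕ}

lemma le_Mx (A : ℕ → ℕ) {k n : ℕ} (h : k ≤ n) : A k ≤ Mx A n :=
  Finset.le_sup (Finset.mem_range.2 (Nat.lt_succ_of_le h))

lemma Mx_succ (A : ℕ → ℕ) (n : ℕ) : Mx A (n+1) = max (A (n+1)) (Mx A n) := by
  simp [Mx, Finset.range_add_one, Finset.sup_insert]

lemma Bf_le (h : Nice l A) {n : ℕ} (hn : n < l) : Bf A n ≤ Mx A n := by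
  have h1 : A n ≤ Mx A n := le_Mx A (le_refl n)
  have h2 := h.hle n hn
  unfold Bf
  split <;> omega

lemma image_Bf (h : Nice l A) : ∀ n, n ≤ l →
    (Finset.range n).image (Bf A) = Finset.range (Mx A n) := by
  intro n
  induction n with
  | zero =>
    intro _
    simp [Mx, h.h0]
  | succ n ih =>
    intro hn
    have hnl : n < l := hn
    have ihh := ih (le_of_lt hnl)
    rw [Finset.range_add_one, Finset.image_insert, ihh, Mx_succ]
    have hne := h.hne n hnl
    have hle := h.hle n hnl
    rcases Nat.lt_or_ge (A (n+1)) (A n) with hc | hc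
    · -- B n = A (n+1) < A n ≤ Mx A n
      have hB : Bf A n = A (n+1) := if_pos hc
      have hAn : A n ≤ Mx A n := le_Mx A (le_refl n)
      have : A (n+1) < Mx A n := lt_of_lt_of_le hc hAn
      rw [hB, max_eq_right (le_of_lt this), Finset.insert_eq_self.2 (Finset.mem_range.2 this)]
    · have hgt : A n < A (n+1) := lt_of_le_of_ne hc fun e => hne e.symm
      have hB : Bf A n = A (n+1) - 1 := if_neg (by omega)
      rcases Nat.lt_or_ge (A (n+1)) (1 + Mx A n) with hc2 | hc2
      · -- A (n+1) ≤ Mx A n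
        have h1 : A (n+1) ≤ Mx A n := by omega
        have h2 : Bf A n < Mx A n := by omega
        rw [hB] at h2 ⊢
        rw [max_eq_right h1, Finset.insert_eq_self.2 (Finset.mem_range.2 h2)]
      · -- A (n+1) = Mx A n + 1
        have h1 : A (n+1) = Mx A n + 1 := by omega
        have h2 : Bf A n = Mx A n := by omega
        rw [hB] at h2
        rw [hB, h2, h1, max_eq_left (by omega), ← Finset.range_add_one]

lemma Bf_inj {A' : ℕ → ℕ} (hA : Nice l A) (hA' : Nice l A')
    (hker : ∀ i < l, ∀ j < l, (Bf A i = Bf A j ↔ Bf A' i = Bf A' j)) :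
    ∀ n < l, Bf A n = Bf A' n := by
  intro n
  induction n using Nat.strong_induction_on with
  | _ n ih =>
    intro hn
    by_cases hfresh : ∃ k, k < n ∧ Bf A k = Bf A n
    · obtain ⟨k, hk, he⟩ := hfresh
      have hkl : k < l := lt_trans hk hn
      have := (hker k hkl n hn).1 he
      rw [← this, ← ih k hk hkl, he]
    · push_neg at hfresh
      have hfresh' : ∀ k, k < n → Bf A' k ≠ Bf A' n := by
        intro k hk he
        exact hfresh k hk ((hker k (lt_trans hk hn) n hn).2 he)
      -- fresh case: Bf A n = Mx A n; also not in image = range (Mx A n)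
      have hnotmem : Bf A n ∉ (Finset.range n).image (Bf A) := by
        intro hm
        obtain ⟨k, hk, he⟩ := Finset.mem_image.1 hm
        exact hfresh k (Finset.mem_range.1 hk) he
      rw [image_Bf hA n (le_of_lt hn)] at hnotmem
      have h1 : Mx A n ≤ Bf A n := by
        by_contra hcon
        exact hnotmem (Finset.mem_range.2 (by omega))
      have hBn : Bf A n = Mx A n := le_antisymm (Bf_le hA hn) h1
      have hnotmem' : Bf A' n ∉ (Finset.range n).image (Bf A') := by
        intro hm
        obtain ⟨k, hk, he⟩ := Finset.mem_image.1 hm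
        exact hfresh' k (Finset.mem_range.1 hk) he
      rw [image_Bf hA' n (le_of_lt hn)] at hnotmem'
      have h1' : Mx A' n ≤ Bf A' n := by
        by_contra hcon
        exact hnotmem' (Finset.mem_range.2 (by omega))
      have hBn' : Bf A' n = Mx A' n := le_antisymm (Bf_le hA' hn) h1'
      -- Mx A n = Mx A' n since images agree by ih
      have himeq : (Finset.range n).image (Bf A) = (Finset.range n).image (Bf A') := by
        apply Finset.image_congr
        intro k hk
        exact ih k (Finset.mem_coe.1 hk |> Finset.mem_range.1) (lt_trans (Finset.mem_range.1 hk) hn)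
      rw [image_Bf hA n (le_of_lt hn), image_Bf hA' n (le_of_lt hn)] at himeq
      have : Mx A n = Mx A' n := by
        have := congrArg Finset.card himeq
        simpa using this
      rw [hBn, hBn', this]

lemma recover (h : Nice l A) {n : ℕ} (hn : n < l) :
    A (n+1) = if Bf A n < A n then Bf A n else Bf A n + 1 := by
  have hne := h.hne n hn
  rcases Nat.lt_or_ge (A (n+1)) (A n) with hc | hc
  · rw [show Bf A n = A (n+1) from if_pos hc, if_pos hc]
  · have hgt : A n < A (n+1) := lt_of_le_of_ne hc fun e => hne e.symm
    have hB : Bf A n = A (n+1) - 1 := if_neg (by omega)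
    rw [hB, if_neg (by omega)]
    omega

lemma A_eq {A' : ℕ → ℕ} (hA : Nice l A) (hA' : Nice l A')
    (hB : ∀ n < l, Bf A n = Bf A' n) : ∀ n ≤ l, A n = A' n := by
  intro n
  induction n with
  | zero => intro _; rw [hA.h0, hA'.h0]
  | succ n ih =>
    intro hn
    have hnl : n < l := hn
    rw [recover hA hnl, recover hA' hnl, hB n hnl, ih (le_of_lt hnl)]


def toA (l : ℕ) (a : Fin (l+1) → ℕ) : ℕ → ℕ := fun n => if h : n < l + 1 then a ⟨n, h⟩ else 0

lemma toA_val (a : Fin (l+1) → ℕ) (i : Fin (l+1)) : toA l a i.val = a i := by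
  simp [toA, i.isLt]

lemma sup_bridge (a : Fin (l+1) → ℕ) (i : Fin l) :
    (Finset.Iic i.castSucc).sup a = Mx (toA l a) i.val := by
  apply le_antisymm
  · apply Finset.sup_le
    intro j hj
    have hj2 : j ≤ i.castSucc := Finset.mem_Iic.1 hj
    have hj' : j.val ≤ i.val := by simpa [Fin.le_def] using hj2
    rw [← toA_val a j]
    exact le_Mx _ hj'
  · apply Finset.sup_le
    intro k hk
    have hk' : k < i.val + 1 := Finset.mem_range.1 hk
    have hkl : k < l + 1 := by have := i.isLt; omega
    have he : toA l a k = a ⟨k, hkl⟩ := by simp [toA, hkl]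
    rw [he]
    refine Finset.le_sup (Finset.mem_Iic.2 ?_)
    show (⟨k, hkl⟩ : Fin (l+1)) ≤ i.castSucc
    rw [Fin.le_def]
    simpa using Nat.lt_succ_iff.1 hk'

lemma nice_of_isAWS {a : Fin (l+1) → ℕ} (h : IsAWS l a) : Nice l (toA l a) where
  h0 := by
    have : toA l a 0 = a 0 := by
      have := toA_val a 0
      simpa using this
    rw [this, h.1]
  hne := fun n hn => by
    have e1 := toA_val a ((⟨n, hn⟩ : Fin l).succ)
    have e2 := toA_val a ((⟨n, hn⟩ : Fin l).castSucc)
    simp only [Fin.val_succ, Fin.coe_castSucc] at e1 e2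
    rw [e1, e2]
    exact h.2.1 ⟨n, hn⟩
  hle := fun n hn => by
    have e1 := toA_val a ((⟨n, hn⟩ : Fin l).succ)
    simp only [Fin.val_succ] at e1
    rw [e1, ← sup_bridge a ⟨n, hn⟩]
    exact h.2.2 ⟨n, hn⟩

lemma aws_ext {a a' : Fin (l+1) → ℕ} (ha : IsAWS l a) (ha' : IsAWS l a')
    (hker : Setoid.ker (fun i : Fin l => Bf (toA l a) i.val) =
      Setoid.ker (fun i : Fin l => Bf (toA l a') i.val)) : a = a' := by
  have hker' : ∀ i < l, ∀ j < l,
      (Bf (toA l a) i = Bf (toA l a) j ↔ Bf (toA l a') i = Bf (toA l a') j) := by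
    intro i hi j hj
    have hrel := Setoid.ext_iff.1 hker ⟨i, hi⟩ ⟨j, hj⟩
    simpa [Setoid.ker_def] using hrel
  have hB := Bf_inj (nice_of_isAWS ha) (nice_of_isAWS ha') hker'
  have hAeq := A_eq (nice_of_isAWS ha) (nice_of_isAWS ha') hB
  funext i
  rw [← toA_val a i, ← toA_val a' i]
  exact hAeq i.val (Nat.lt_succ_iff.1 i.isLt)

lemma nice_le (h : Nice l A) : ∀ n ≤ l, A n ≤ n := by
  intro n
  induction n using Nat.strong_induction_on with
  | _ n ih =>
    intro hn
    match n with
    | 0 => simp [h.h0]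
    | Nat.succ m =>
      have h1 : Mx A m ≤ m := Finset.sup_le fun k hk => by
        have hk' := Finset.mem_range.1 hk
        exact le_trans (ih k (by omega) (by omega)) (by omega)
      have := h.hle m (by omega)
      show A (m+1) ≤ m + 1
      omega

lemma aws_le {a : Fin (l+1) → ℕ} (h : IsAWS l a) (i : Fin (l+1)) : a i ≤ i.val := by
  rw [← toA_val a i]
  exact nice_le (nice_of_isAWS h) i.val (Nat.lt_succ_iff.1 i.isLt)

lemma finite_aws (l : ℕ) : Finite {a : Fin (l+1) → ℕ // IsAWS l a} :=
  Finite.of_injective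
    (fun a => (fun i : Fin (l+1) => (⟨a.1 i, lt_of_le_of_lt (aws_le a.2 i) i.isLt⟩ : Fin (l+1))))
    (fun a a' h => Subtype.ext (funext fun i => congrArg Fin.val (congrFun h i)))

end AWSAux

/-- For every positive `l` and finite nonempty type set `T`, the number of heterogeneous
anonymous walk sequences of length `l` over `T` equals the sum, over all anonymous walk
sequences `a` of length `l`, of `|T|` raised to the number of distinct values occurring in
`a`; consequently it is at most `|T|^(l+1) · B_l`, with `B_l` the number of partitions of
an `l`-element set. -/
theorem haw_count_formula (l : ℕ) (hl : 0 < l) (T : Type*) [Fintype T] [Nonempty T] :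
    Nat.card {p : (Fin (l + 1) → ℕ) × (Fin (l + 1) → T) //
        IsAWS l p.1 ∧ ∀ i j, p.1 i = p.1 j → p.2 i = p.2 j} =
      (∑ᶠ a : {a : Fin (l + 1) → ℕ // IsAWS l a},
        Fintype.card T ^ (Finset.univ.image a.1).card) ∧
    Nat.card {p : (Fin (l + 1) → ℕ) × (Fin (l + 1) → T) //
        IsAWS l p.1 ∧ ∀ i j, p.1 i = p.1 j → p.2 i = p.2 j} ≤
      Fintype.card T ^ (l + 1) * Nat.card (Setoid (Fin l)) := by
  classical
  haveI finAWS : Finite {a : Fin (l+1) → ℕ // IsAWS l a} := AWSAux.finite_aws l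
  haveI instF : Fintype {a : Fin (l+1) → ℕ // IsAWS l a} := Fintype.ofFinite _
  let e : {p : (Fin (l + 1) → ℕ) × (Fin (l + 1) → T) //
        IsAWS l p.1 ∧ ∀ i j, p.1 i = p.1 j → p.2 i = p.2 j} ≃
      Σ a : {a : Fin (l + 1) → ℕ // IsAWS l a},
        {t : Fin (l + 1) → T // ∀ i j, a.1 i = a.1 j → t i = t j} :=
    { toFun := fun p => ⟨⟨p.1.1, p.2.1⟩, ⟨p.1.2, p.2.2⟩⟩
      invFun := fun q => ⟨(q.1.1, q.2.1), q.1.2, q.2.2⟩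
      left_inv := fun p => rfl
      right_inv := fun q => rfl }
  have fib : ∀ a : {a : Fin (l + 1) → ℕ // IsAWS l a},
      Nat.card {t : Fin (l + 1) → T // ∀ i j, a.1 i = a.1 j → t i = t j} =
        Fintype.card T ^ (Finset.univ.image a.1).card := by
    intro a
    let f : {t : Fin (l + 1) → T // ∀ i j, a.1 i = a.1 j → t i = t j} ≃ (Set.range a.1 → T) :=
      { toFun := fun t v => t.1 v.2.choose
        invFun := fun g => ⟨fun i => g ⟨a.1 i, ⟨i, rfl⟩⟩, fun i j h => congrArg g (Subtype.ext h)⟩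
        left_inv := fun t => Subtype.ext (funext fun i =>
          t.2 _ i (⟨a.1 i, ⟨i, rfl⟩⟩ : Set.range a.1).2.choose_spec)
        right_inv := fun g => funext fun v => congrArg g (Subtype.ext v.2.choose_spec) }
    rw [Nat.card_congr f]
    haveI : Finite (Set.range a.1) := Set.finite_range a.1
    rw [Nat.card_fun]
    have hr : Set.range a.1 = ↑(Finset.univ.image a.1) := by
      simp [Finset.coe_image]
    rw [Nat.card_coe_set_eq, hr, Set.ncard_coe_finset, Nat.card_eq_fintype_card]
  haveI instFib : ∀ a : {a : Fin (l + 1) → ℕ // IsAWS l a},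
      Fintype {t : Fin (l + 1) → T // ∀ i j, a.1 i = a.1 j → t i = t j} :=
    fun a => Fintype.ofFinite _
  have hcard : Nat.card {p : (Fin (l + 1) → ℕ) × (Fin (l + 1) → T) //
        IsAWS l p.1 ∧ ∀ i j, p.1 i = p.1 j → p.2 i = p.2 j} =
      ∑ a : {a : Fin (l + 1) → ℕ // IsAWS l a},
        Fintype.card T ^ (Finset.univ.image a.1).card := by
    rw [Nat.card_congr e, Nat.card_eq_fintype_card, Fintype.card_sigma]
    exact Finset.sum_congr rfl fun a _ => by rw [← fib a, Nat.card_eq_fintype_card]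
  constructor
  · exact hcard.trans (finsum_eq_sum_of_fintype _).symm
  · haveI : Finite (Setoid (Fin l)) := Finite.of_injective (fun s : Setoid (Fin l) => s.r)
      (fun s t h => by cases s; cases t; cases h; rfl)
    have hinj : Function.Injective (fun a : {a : Fin (l + 1) → ℕ // IsAWS l a} =>
        Setoid.ker (fun i : Fin l => AWSAux.Bf (AWSAux.toA l a.1) i.val)) :=
      fun a a' h => Subtype.ext (AWSAux.aws_ext a.2 a'.2 h)
    have hAWS_le : Fintype.card {a : Fin (l + 1) → ℕ // IsAWS l a} ≤
        Nat.card (Setoid (Fin l)) := by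
      rw [← Nat.card_eq_fintype_card]
      exact Nat.card_le_card_of_injective _ hinj
    rw [hcard]
    calc ∑ a : {a : Fin (l + 1) → ℕ // IsAWS l a},
          Fintype.card T ^ (Finset.univ.image a.1).card
        ≤ ∑ _a : {a : Fin (l + 1) → ℕ // IsAWS l a}, Fintype.card T ^ (l + 1) :=
          Finset.sum_le_sum fun a _ =>
            Nat.pow_le_pow_right Fintype.card_pos
              (le_trans Finset.card_image_le (by simp))
      _ = Fintype.card {a : Fin (l + 1) → ℕ // IsAWS l a} * Fintype.card T ^ (l + 1) := by
          simp [Finset.sum_const, Finset.card_univ]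
      _ ≤ Nat.card (Setoid (Fin l)) * Fintype.card T ^ (l + 1) :=
          Nat.mul_le_mul hAWS_le (le_refl _)
      _ = Fintype.card T ^ (l + 1) * Nat.card (Setoid (Fin l)) := mul_comm _ _
end
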